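/- Let (A, μ) be a commutative associative algebra, ξ: A → A an algebra map, and 𝔇: A → A a λ-(ξ,ξ)-derivation with 𝔇∘ξ = ξ∘𝔇. Define a * b := ξ(a)𝔇(b) + κ ξ(a)ξ(b) for a fixed κ ∈ K. Then (A, *, ξ, ξ) is a BiHom-pre-Lie algebra and a BiHom-Novikov algebra. -/
import Mathlib


/-- (Left) BiHom-pre-Lie algebra `(A, c, α, β)`. -/
def BHPreLie {K A : Type*} [Field K] [AddCommGroup A] [Module K A]
    (c : A →ₗ[K] A →ₗ[K] A) (α β : A →ₗ[K] A) : Prop :=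
  (∀ a, α (β a) = β (α a)) ∧
  (∀ a b, α (c a b) = c (α a) (α b)) ∧
  (∀ a b, β (c a b) = c (β a) (β b)) ∧
  (∀ a b x, c (α (β a)) (c (α b) x) - c (c (β a) (α b)) (β x) =
    c (α (β b)) (c (α a) x) - c (c (β b) (α a)) (β x))

/-- BiHom-Novikov algebra: BiHom-pre-Lie plus `(a*β(b))*αβ(c) = (a*β(c))*αβ(b)`. -/
def BHNovikov {K A : Type*} [Field K] [AddCommGroup A] [Module K A]
    (c : A →ₗ[K] A →ₗ[K] A) (α β : A →ₗ[K] A) : Prop :=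
  BHPreLie c α β ∧
  (∀ a b x, c (c a (β b)) (α (β x)) = c (c a (β x)) (α (β b)))

/-- BiHom-pre-Lie bimodule over a BiHom-pre-Lie algebra `(A, c, α, β)`. -/
def BHPreLieBimod {K A M : Type*} [Field K] [AddCommGroup A] [Module K A]
    [AddCommGroup M] [Module K M]
    (c : A →ₗ[K] A →ₗ[K] A) (α β : A →ₗ[K] A)
    (cl : A →ₗ[K] M →ₗ[K] M) (cr : M →ₗ[K] A →ₗ[K] M)
    (αM βM : M →ₗ[K] M) : Prop :=
  (∀ m, αM (βM m) = βM (αM m)) ∧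
  (∀ a m, αM (cl a m) = cl (α a) (αM m)) ∧
  (∀ m a, αM (cr m a) = cr (αM m) (α a)) ∧
  (∀ a m, βM (cl a m) = cl (β a) (βM m)) ∧
  (∀ m a, βM (cr m a) = cr (βM m) (β a)) ∧
  (∀ a b m, cl (α (β a)) (cl (α b) m) - cl (c (β a) (α b)) (βM m) =
    cl (α (β b)) (cl (α a) m) - cl (c (β b) (α a)) (βM m)) ∧
  (∀ a m x, cl (α (β a)) (cr (αM m) x) - cr (cl (β a) (αM m)) (β x) =
    cr (αM (βM m)) (c (α a) x) - cr (cr (βM m) (α a)) (β x))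

/-- for a commutative associative algebra `A`, an algebra map `ξ` and a
`lam`-`(ξ,ξ)`-derivation `D` with `Dξ = ξD`, the product
`a * b = ξ(a)D(b) + κ ξ(a)ξ(b)` makes `(A, *, ξ, ξ)` a BiHom-pre-Lie algebra and a
BiHom-Novikov algebra. -/
theorem stmt12 (K A : Type*) [Field K] [CommRing A] [Algebra K A] (lam κ : K)
    (ξ D : A →ₗ[K] A)
    (hξ : ∀ a b, ξ (a * b) = ξ a * ξ b)
    (hD : ∀ a b, D (a * b) = ξ a * D b + D a * ξ b + lam • (ξ a * ξ b))
    (hDξ : ∀ a, D (ξ a) = ξ (D a))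
    (star : A →ₗ[K] A →ₗ[K] A)
    (hstar : ∀ a b, star a b = ξ a * D b + κ • (ξ a * ξ b)) :
    BHPreLie star ξ ξ ∧ BHNovikov star ξ ξ := by
  have hmul : ∀ a b, ξ (star a b) = star (ξ a) (ξ b) := by
    intro a b
    rw [hstar, hstar, map_add, map_smul, hξ, hξ, hDξ]
  have hpre : BHPreLie star ξ ξ := by
    refine ⟨fun a => rfl, hmul, hmul, fun a b x => ?_⟩
    simp only [hstar, map_add, map_smul, hξ, hD, hDξ, smul_mul_assoc, mul_smul_comm,
      mul_add, add_mul, smul_add, smul_smul, LinearMap.add_apply, LinearMap.smul_apply]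
    simp only [Algebra.smul_def, map_mul]
    ring
  refine ⟨hpre, hpre, fun a b x => ?_⟩
  simp only [hstar, map_add, map_smul, hξ, hD, hDξ, smul_mul_assoc, mul_smul_comm,
    mul_add, add_mul, smul_add, smul_smul, LinearMap.add_apply, LinearMap.smul_apply]
  simp only [Algebra.smul_def, map_mul]
  ring
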